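/- Let G be a finitely generated group such that for every g in G the twisted conjugacy class [e]_g = {[x,g] : x ∈ G} is a subgroup of G. Suppose that for every sequence g₁, g₂, … of elements of G the intersection ⋂_k [e]_{[g₁,…,g_k]} (over all k ≥ 1, where [g₁,…,g_k] is the left-normed commutator) equals {e}. Then for every k, either γ_k(G) = {e} or γ_k(G) ≠ γ_{k+1}(G). -/

import Mathlib

open scoped commutatorElement

/-- The twisted conjugacy class of the identity under the inner automorphism
induced by `g`: `[e]_g = {⁅x, g⁆ : x ∈ G}`. -/
def twistedClass {G : Type*} [Group G] (g : G) : Set G :=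
  {y : G | ∃ x : G, y = ⁅x, g⁆}

/-- The left-normed iterated commutator: `leftNormed g k = [g 0, g 1, …, g k]`. -/
def leftNormed {G : Type*} [Group G] (g : ℕ → G) : ℕ → G
  | 0 => g 0
  | k + 1 => ⁅leftNormed g k, g (k + 1)⁆

/-!
Write `K c = ⁅⟨⟨c⟩⟩, G⁆`. It is the subgroup generated by `twistedClass c`, so the hypothesis
says `K c = twistedClass c`. If `G` is generated by a finite set `S`, then `γ_k` is the normal
closure of the finite set `F` of left-normed commutators of weight `k + 1` in `S`, hence
`γ_{k+1} = ⨆ c ∈ F, K c`.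

Now let `N = ⨆ c ∈ F, K c` with `F` finite and `F ⊆ N`, and for `c ∈ F` put
`M = ⨆ d ∈ F \ {c}, K d`. Then `c⁻¹ ∈ N = K c ⊔ M` reads `⁅y, c⁆ * p = c⁻¹` with `p ∈ M`
(Mathlib's convention `⁅y, c⁆ = y * c * y⁻¹ * c⁻¹`), i.e. `y * c * y⁻¹ = c⁻¹ * p⁻¹ * c ∈ M`,
so `c ∈ M` and `K c ≤ M`. Removing the elements of `F` one at a time gives `N = ⊥`.
-/

namespace Subgroup

variable {G : Type*} [Group G]

lemma commutator_normalClosure_top_le {A : Set G} {Q : Subgroup G} [Q.Normal]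
    (h : ∀ a ∈ A, ∀ y, ⁅a, y⁆ ∈ Q) : ⁅normalClosure A, ⊤⁆ ≤ Q := by
  have : (upperCentralSeriesStep Q).Normal :=
    upperCentralSeriesStep_eq_comap_center Q ▸ inferInstance
  have hA : normalClosure A ≤ upperCentralSeriesStep Q := normalClosure_le_normal h
  exact (commutator_le ..).2 fun p hp y _ => hA hp y

lemma commutator_mem_of_forall_mem_closure {S : Set G} (hS : closure S = ⊤) {Q : Subgroup G}
    [Q.Normal] {a : G} (h : ∀ s ∈ S, ⁅a, s⁆ ∈ Q) (y : G) : ⁅a, y⁆ ∈ Q := by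
  induction (hS ▸ mem_top y : y ∈ closure S) using closure_induction with
  | mem s hs => exact h s hs
  | one => simp
  | mul x z _ _ hx hz =>
    have : ⁅a, x * z⁆ = ⁅a, x⁆ * (x * ⁅a, z⁆ * x⁻¹) := by group
    exact this ▸ mul_mem hx (Normal.conj_mem ‹_› _ hz x)
  | inv x _ hx =>
    have : ⁅a, x⁻¹⁆ = x⁻¹ * ⁅a, x⁆⁻¹ * x⁻¹⁻¹ := by group
    exact this ▸ Normal.conj_mem ‹_› _ (inv_mem hx) x⁻¹

lemma commutator_normalClosure_top_eq {S : Set G} (hS : closure S = ⊤) (A : Set G) :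
    ⁅normalClosure A, ⊤⁆ = normalClosure (Set.image2 (⁅·, ·⁆) A S) := by
  refine le_antisymm (commutator_normalClosure_top_le fun a ha => ?_) ?_
  · exact commutator_mem_of_forall_mem_closure hS fun s hs =>
      subset_normalClosure (Set.mem_image2_of_mem ha hs)
  · refine normalClosure_le_normal ?_
    rintro _ ⟨a, ha, s, -, rfl⟩
    exact commutator_mem_commutator (subset_normalClosure ha) (mem_top s)

lemma commutator_normalClosure_top_eq_iSup (A : Set G) :
    ⁅normalClosure A, (⊤ : Subgroup G)⁆ = ⨆ a ∈ A, ⁅normalClosure {a}, ⊤⁆ := by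
  refine le_antisymm (commutator_normalClosure_top_le fun a ha y => ?_) ?_
  · refine le_iSup₂ (f := fun a (_ : a ∈ A) => ⁅normalClosure {a}, (⊤ : Subgroup G)⁆) a ha ?_
    exact commutator_mem_commutator (subset_normalClosure rfl) (mem_top y)
  · exact iSup₂_le fun a ha =>
      commutator_mono (normalClosure_mono (Set.singleton_subset_iff.2 ha)) le_rfl

lemma exists_finite_lowerCentralSeries_eq_normalClosure (hG : Group.FG G) (k : ℕ) :
    ∃ F : Set G, F.Finite ∧ (⊤ : Subgroup G).lowerCentralSeries k = normalClosure F := by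
  obtain ⟨S, hS⟩ := hG.out
  induction k with
  | zero =>
    exact ⟨S, S.finite_toSet, (top_le_iff.1 (hS ▸ closure_le_normalClosure)).symm⟩
  | succ k ih =>
    obtain ⟨F, hF, hk⟩ := ih
    exact ⟨_, hF.image2 _ S.finite_toSet, by
      rw [lowerCentralSeries_succ, hk, commutator_normalClosure_top_eq hS]⟩

end Subgroup

open Subgroup

section TwistedClass

variable {G : Type*} [Group G]

lemma commutator_mem_of_coe_eq_twistedClass {g : G} {H : Subgroup G}
    (hH : (H : Set G) = twistedClass g) (x : G) : ⁅x, g⁆ ∈ H := by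
  rw [← SetLike.mem_coe, hH]
  exact ⟨x, rfl⟩

lemma normal_of_coe_eq_twistedClass {g : G} {H : Subgroup G} (hH : (H : Set G) = twistedClass g) :
    H.Normal := by
  have mem := commutator_mem_of_coe_eq_twistedClass hH
  refine ⟨fun a ha z => ?_⟩
  obtain ⟨x, rfl⟩ : a ∈ twistedClass g := hH ▸ ha
  have : z * ⁅x, g⁆ * z⁻¹ = ⁅z * x, g⁆ * ⁅z, g⁆⁻¹ := by group
  exact this ▸ mul_mem (mem _) (inv_mem (mem z))

lemma coe_commutator_normalClosure_singleton {g : G}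
    (hg : ∃ H : Subgroup G, (H : Set G) = twistedClass g) :
    ((⁅normalClosure {g}, ⊤⁆ : Subgroup G) : Set G) = twistedClass g := by
  obtain ⟨H, hH⟩ := hg
  have := normal_of_coe_eq_twistedClass hH
  suffices ⁅normalClosure {g}, ⊤⁆ = H by rw [this, hH]
  refine le_antisymm (commutator_normalClosure_top_le ?_) fun a ha => ?_
  · intro a ha y
    rw [Set.mem_singleton_iff.1 ha, ← commutatorElement_inv]
    exact inv_mem (commutator_mem_of_coe_eq_twistedClass hH y)
  · obtain ⟨x, rfl⟩ : a ∈ twistedClass g := hH ▸ ha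
    exact commutatorElement_inv g x ▸
      inv_mem (commutator_mem_commutator (subset_normalClosure rfl) (mem_top x))

lemma mem_of_mem_commutator_normalClosure_sup {c : G}
    (hc : ∃ H : Subgroup G, (H : Set G) = twistedClass c) {M : Subgroup G} [M.Normal]
    (h : c ∈ ⁅normalClosure {c}, ⊤⁆ ⊔ M) : c ∈ M := by
  have hinv : c⁻¹ ∈ ((⁅normalClosure {c}, ⊤⁆ ⊔ M : Subgroup G) : Set G) := inv_mem h
  rw [mul_normal, coe_commutator_normalClosure_singleton hc] at hinv
  obtain ⟨_, ⟨y, rfl⟩, p, hp, hyp⟩ := hinv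
  have hconj : y * c * y⁻¹ = c⁻¹ * p⁻¹ * c⁻¹⁻¹ := by rw [eq_inv_mul_of_mul_eq hyp]; group
  have hM : y * c * y⁻¹ ∈ M := hconj ▸ Normal.conj_mem ‹_› _ (inv_mem hp) c⁻¹
  simpa [mul_assoc] using Normal.conj_mem ‹_› _ hM y⁻¹

lemma eq_bot_of_eq_iSup_commutator_normalClosure
    (hG : ∀ g : G, ∃ H : Subgroup G, (H : Set G) = twistedClass g) {F : Set G} (hF : F.Finite) :
    ∀ {N : Subgroup G}, F ⊆ N → N = ⨆ c ∈ F, ⁅normalClosure {c}, ⊤⁆ → N = ⊥ := by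
  induction F, hF using Set.Finite.induction_on with
  | empty => simp
  | @insert c F _ _ ih =>
    intro N hFN hN
    rw [iSup_insert] at hN
    have hc : c ∈ ⨆ d ∈ F, ⁅normalClosure {d}, ⊤⁆ :=
      mem_of_mem_commutator_normalClosure_sup (hG c) (hN ▸ hFN (Set.mem_insert c F))
    have hKc : ⁅normalClosure {c}, ⊤⁆ ≤ ⨆ d ∈ F, ⁅normalClosure {d}, ⊤⁆ :=
      (commutator_mono (normalClosure_le_normal (Set.singleton_subset_iff.2 hc)) le_top).trans
        (commutator_le_left _ _)
    rw [sup_eq_right.2 hKc] at hN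
    exact ih ((Set.subset_insert c F).trans hFN) hN

end TwistedClass

theorem stmt_14_general {G : Type*} [Group G] (hfg : Group.FG G)
    (h : ∀ g : G, ∃ H : Subgroup G, (H : Set G) = twistedClass g) :
    ∀ k : ℕ, (⊤ : Subgroup G).lowerCentralSeries k = ⊥ ∨
      (⊤ : Subgroup G).lowerCentralSeries k ≠ (⊤ : Subgroup G).lowerCentralSeries (k + 1) := by
  intro k
  obtain ⟨F, hF, hkF⟩ := exists_finite_lowerCentralSeries_eq_normalClosure hfg k
  refine or_iff_not_imp_right.2 fun hk => ?_
  refine eq_bot_of_eq_iSup_commutator_normalClosure h hF (hkF ▸ subset_normalClosure) ?_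
  rw [not_not.1 hk, Subgroup.lowerCentralSeries_succ, hkF, commutator_normalClosure_top_eq_iSup]

theorem stmt_14 {G : Type*} [Group G] (hfg : Group.FG G)
    (h : ∀ g : G, ∃ H : Subgroup G, (H : Set G) = twistedClass g)
    (hint : ∀ g : ℕ → G, (⋂ k : ℕ, twistedClass (leftNormed g k)) = {(1 : G)}) :
    ∀ k : ℕ, (⊤ : Subgroup G).lowerCentralSeries k = ⊥ ∨
      (⊤ : Subgroup G).lowerCentralSeries k ≠ (⊤ : Subgroup G).lowerCentralSeries (k + 1) :=
  stmt_14_general hfg h
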